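/- For every real number x, the series Σ_{n=0}^{∞} ε_n·x^n/n! converges and its sum equals e^{2x + x²/2}, where ε_n is the number of skew-symmetric (n,n)-clans in the largest sect. -/

import Mathlib

/-!
A skew-symmetric clan in the largest sect is determined by its first half: each position
`i ≤ n` either carries `−` or is matched with the mirror image of some position `j ≤ n`
(possibly `j = i`), and `i ↦ j` is an involution. So `ε_n` counts the involutions of an
`n`-set whose fixed points are coloured with two colours, and removing one point gives
`ε (n + 2) = 2 ε (n + 1) + (n + 1) ε n`.

The entire function `g z = exp (2 z + z² / 2)` satisfies `g' = (2 + z) g`, so by Leibniz's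
rule its derivatives at `0` satisfy the same recurrence with the same initial values; the
series is the Taylor expansion of `g`.
-/

/-- A skew-symmetric `(n,n)`-clan, encoded (via the standard bijection with signed
involutions) as a pair `(σ, s)` where `σ` is an involution of the `2n` positions whose
2-cycles are the pairs of positions carrying matching natural numbers, and `s` records
the signs at the fixed points (`true` = `+`, `false` = `−`; `s` is normalized to `true`
on non-fixed points).  The conditions say: `σ` is an involution; `s` is normalized;
there are equally many `+`'s and `−`'s among the sign symbols; and the clan equals its
reverse with all signs interchanged (`Fin.rev` is the reflection `i ↦ 2n+1−i`). -/
def IsSkewClan (n : ℕ) (σ : Equiv.Perm (Fin (2 * n))) (s : Fin (2 * n) → Bool) : Prop :=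
  Function.Involutive σ ∧
  (∀ i, σ i ≠ i → s i = true) ∧
  (Finset.univ.filter (fun i => σ i = i ∧ s i = true)).card =
    (Finset.univ.filter (fun i => σ i = i ∧ s i = false)).card ∧
  (∀ i, σ (Fin.rev i) = Fin.rev (σ i)) ∧
  (∀ i, σ i = i → s (Fin.rev i) = !(s i))

/-- `Z_n`, the number of skew-symmetric `(n,n)`-clans. -/
noncomputable def Znum (n : ℕ) : ℕ :=
  Nat.card {p : Equiv.Perm (Fin (2 * n)) × (Fin (2 * n) → Bool) // IsSkewClan n p.1 p.2}

/-- A skew-symmetric `(n,n)`-clan `(σ, s)` lies in the *largest sect* if every `−` sign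
(`s i = false` at a fixed point) occupies a position in the first half, every `+` sign
occupies a position in the second half, and every pair of matching natural numbers has
one position in each half. -/
def IsLargestSectClan (n : ℕ) (σ : Equiv.Perm (Fin (2 * n))) (s : Fin (2 * n) → Bool) :
    Prop :=
  IsSkewClan n σ s ∧
  (∀ i : Fin (2 * n), σ i = i → (s i = false ↔ i.val < n)) ∧
  (∀ i : Fin (2 * n), σ i ≠ i → (i.val < n ↔ ¬ (σ i).val < n))

/-- `ε_n`, the number of skew-symmetric `(n,n)`-clans in the largest sect. -/
noncomputable def epsnum (n : ℕ) : ℕ :=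
  Nat.card {p : Equiv.Perm (Fin (2 * n)) × (Fin (2 * n) → Bool) //
    IsLargestSectClan n p.1 p.2}

open Function

@[ext]
structure SignedInvolution (α : Type*) where
  toFun : α → α
  sign : α → Bool
  involutive : Involutive toFun
  sign_eq_true_of_ne : ∀ x, toFun x ≠ x → sign x = true

namespace SignedInvolution

variable {α β : Type*}

instance : CoeFun (SignedInvolution α) (fun _ => α → α) := ⟨toFun⟩

@[simp] lemma apply_apply (s : SignedInvolution α) (x : α) : s (s x) = x := s.involutive x

lemma apply_eq_self_of_sign_eq_false (s : SignedInvolution α) {x : α} (h : s.sign x = false) :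
    s x = x := by
  by_contra hx
  simp [s.sign_eq_true_of_ne x hx] at h

lemma sign_apply (s : SignedInvolution α) (x : α) : s.sign (s x) = s.sign x := by
  by_cases hx : s x = x
  · rw [hx]
  · rw [s.sign_eq_true_of_ne x hx, s.sign_eq_true_of_ne (s x) (by simpa [eq_comm] using hx)]

instance [Finite α] : Finite (SignedInvolution α) :=
  Finite.of_injective (fun s => (s.toFun, s.sign)) fun s t h => by
    simp only [Prod.mk.injEq] at h
    exact SignedInvolution.ext h.1 h.2

def map (e : α ≃ β) (s : SignedInvolution α) : SignedInvolution β where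
  toFun := e ∘ s ∘ e.symm
  sign := s.sign ∘ e.symm
  involutive y := by simp
  sign_eq_true_of_ne y hy := s.sign_eq_true_of_ne _ fun h => hy (by simp [h])

def congr (e : α ≃ β) : SignedInvolution α ≃ SignedInvolution β where
  toFun := map e
  invFun := map e.symm
  left_inv s := by ext <;> simp [map]
  right_inv s := by ext <;> simp [map]

lemma apply_some_eq_some_getD (s : SignedInvolution (Option α)) {a : α}
    (hs : s none ≠ some a) : s (some a) = some ((s (some a)).getD a) := by
  cases h : s (some a) with
  | none => exact absurd (by simpa using (congrArg s h).symm) hs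
  | some b => rfl

lemma getD_apply_some_getD (s : SignedInvolution (Option α)) {a : α} (hs : s none ≠ some a) :
    (s (some ((s (some a)).getD a))).getD ((s (some a)).getD a) = a := by
  have := apply_apply s (some a)
  rw [apply_some_eq_some_getD s hs] at this
  simp [this]

def restrictOption (s : SignedInvolution (Option α)) (hs : s none = none) :
    SignedInvolution α where
  toFun a := (s (some a)).getD a
  sign a := s.sign (some a)
  involutive a := getD_apply_some_getD s (by simp [hs])
  sign_eq_true_of_ne a ha := s.sign_eq_true_of_ne _ fun h => ha (by simp [h])

def extendOption (b : Bool) (t : SignedInvolution α) : SignedInvolution (Option α) where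
  toFun := Option.map t
  sign o := o.elim b t.sign
  involutive o := by cases o <;> simp
  sign_eq_true_of_ne o ho := by
    cases o with
    | none => simp at ho
    | some a => exact t.sign_eq_true_of_ne a fun h => ho (by simp [h])

def fixingNoneEquiv : {s : SignedInvolution (Option α) // s none = none} ≃
    Bool × SignedInvolution α where
  toFun s := (s.1.sign none, restrictOption s.1 s.2)
  invFun p := ⟨extendOption p.1 p.2, rfl⟩
  left_inv s := by
    obtain ⟨s, hs⟩ := s
    refine Subtype.ext (SignedInvolution.ext (funext fun o => ?_) (funext fun o => ?_))
    · cases o with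
      | none => exact hs.symm
      | some a => exact (apply_some_eq_some_getD s (by simp [hs])).symm
    · cases o <;> rfl
  right_inv p := by
    obtain ⟨b, t⟩ := p
    ext <;> rfl

lemma getD_apply_some_ne (s : SignedInvolution (Option α)) {a : α} (hs : s none = some a) {x : α}
    (hx : x ≠ a) : (s (some x)).getD x ≠ a := by
  intro h
  have hx' := apply_some_eq_some_getD s (a := x) (by simpa [hs] using hx.symm)
  rw [h] at hx'
  have : s (some a) = none := by rw [← hs, apply_apply]
  simp [← hx', apply_apply] at this

section Pairing

variable [DecidableEq α] {a : α}

def restrictPairing (s : SignedInvolution (Option α)) (hs : s none = some a) :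
    SignedInvolution {x // x ≠ a} where
  toFun x := ⟨(s (some x)).getD x, getD_apply_some_ne s hs x.2⟩
  sign x := s.sign (some x)
  involutive x := Subtype.ext (getD_apply_some_getD s (by simpa [hs] using x.2.symm))
  sign_eq_true_of_ne x hx := s.sign_eq_true_of_ne _ fun h => hx (by simp [h])

def extendPairing (a : α) (t : SignedInvolution {x // x ≠ a}) :
    SignedInvolution (Option α) where
  toFun
    | none => some a
    | some x => if h : x = a then none else some (t ⟨x, h⟩)
  sign
    | none => true
    | some x => if h : x = a then true else t.sign ⟨x, h⟩
  involutive o := by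
    rcases o with _ | x
    · simp
    · by_cases h : x = a
      · simp [h]
      · simp [h, (t ⟨x, h⟩).2]
  sign_eq_true_of_ne o ho := by
    rcases o with _ | x
    · rfl
    · by_cases h : x = a
      · simp [h]
      · simp only [h, dite_false] at ho ⊢
        exact t.sign_eq_true_of_ne _ fun e => ho (by simp [e])

def pairingEquiv (a : α) : {s : SignedInvolution (Option α) // s none = some a} ≃
    SignedInvolution {x // x ≠ a} where
  toFun s := restrictPairing s.1 s.2
  invFun t := ⟨extendPairing a t, rfl⟩
  left_inv s := by
    obtain ⟨s, hs⟩ := s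
    have hsa : s (some a) = none := by rw [← hs, apply_apply]
    refine Subtype.ext (SignedInvolution.ext (funext fun o => ?_) (funext fun o => ?_))
    · rcases o with _ | x
      · exact hs.symm
      · by_cases h : x = a
        · subst h
          exact (dif_pos rfl).trans hsa.symm
        · exact (dif_neg h).trans
            (apply_some_eq_some_getD s (by simpa [hs] using Ne.symm h)).symm
    · rcases o with _ | x
      · exact (s.sign_eq_true_of_ne none (by simp [hs])).symm
      · by_cases h : x = a
        · subst h
          exact (dif_pos rfl).trans (s.sign_eq_true_of_ne _ (by simp [hsa])).symm
        · exact dif_neg h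
  right_inv t := by
    ext x
    · simp [restrictPairing, extendPairing, x.2]
    · simp [restrictPairing, extendPairing, x.2]

end Pairing

lemma card_of_isEmpty [IsEmpty α] : Nat.card (SignedInvolution α) = 1 :=
  Nat.card_eq_one_iff_unique.mpr
    ⟨⟨fun s t => by ext x <;> exact isEmptyElim x⟩,
      ⟨⟨isEmptyElim, isEmptyElim, isEmptyElim, isEmptyElim⟩⟩⟩

theorem card_option [Fintype α] [DecidableEq α] :
    Nat.card (SignedInvolution (Option α)) =
      2 * Nat.card (SignedInvolution α) +
        ∑ a : α, Nat.card (SignedInvolution {x // x ≠ a}) := by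
  rw [← Nat.card_congr (Equiv.sigmaFiberEquiv fun s : SignedInvolution (Option α) => s none),
    Nat.card_sigma, Fintype.sum_option, Nat.card_congr fixingNoneEquiv, Nat.card_prod,
    Nat.card_eq_fintype_card (α := Bool), Fintype.card_bool]
  simp only [Nat.card_congr (pairingEquiv _)]

theorem card_fin_add_two (n : ℕ) :
    Nat.card (SignedInvolution (Fin (n + 2))) =
      2 * Nat.card (SignedInvolution (Fin (n + 1))) +
        (n + 1) * Nat.card (SignedInvolution (Fin n)) := by
  rw [Nat.card_congr (congr (finSuccEquiv (n + 1))), card_option]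
  simp only [← Nat.card_congr (congr (finSuccAboveEquiv _)), Finset.sum_const,
    Finset.card_univ, Fintype.card_fin, smul_eq_mul]

end SignedInvolution

section Halves

variable {n : ℕ}

def lowPos (i : Fin n) : Fin (2 * n) := Fin.castLE (by omega) i

def highPos (i : Fin n) : Fin (2 * n) := (lowPos i).rev

def halfIdx (p : Fin (2 * n)) : Fin n :=
  if h : p.val < n then ⟨p, h⟩ else ⟨2 * n - 1 - p, by omega⟩

@[simp] lemma val_lowPos (i : Fin n) : (lowPos i).val = i := rfl

lemma val_highPos (i : Fin n) : (highPos i).val = 2 * n - 1 - i := by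
  simp [highPos, Fin.val_rev]; omega

lemma lowPos_lt (i : Fin n) : (lowPos i).val < n := i.2

lemma not_highPos_lt (i : Fin n) : ¬ (highPos i).val < n := by simp [val_highPos]; omega

@[simp] lemma rev_lowPos (i : Fin n) : (lowPos i).rev = highPos i := rfl

@[simp] lemma rev_highPos (i : Fin n) : (highPos i).rev = lowPos i := Fin.rev_rev _

@[simp] lemma halfIdx_lowPos (i : Fin n) : halfIdx (lowPos i) = i := by
  simp [halfIdx]

@[simp] lemma halfIdx_highPos (i : Fin n) : halfIdx (highPos i) = i := by
  rw [halfIdx, dif_neg (not_highPos_lt i)]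
  ext; simp [val_highPos]; omega

@[simp] lemma lowPos_ne_highPos (i j : Fin n) : lowPos i ≠ highPos j := fun h =>
  not_highPos_lt j (h ▸ lowPos_lt i)

@[simp] lemma highPos_ne_lowPos (i j : Fin n) : highPos i ≠ lowPos j :=
  (lowPos_ne_highPos j i).symm

lemma highPos_halfIdx {p : Fin (2 * n)} (hp : ¬ p.val < n) : highPos (halfIdx p) = p := by
  ext; simp [halfIdx, hp, val_highPos]; omega

@[elab_as_elim]
lemma halves_induction {motive : Fin (2 * n) → Prop} (low : ∀ i, motive (lowPos i))
    (high : ∀ i, motive (highPos i)) (p : Fin (2 * n)) : motive p := by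
  by_cases hp : p.val < n
  · simpa [lowPos, halfIdx, hp] using low (halfIdx p)
  · simpa [highPos_halfIdx hp] using high (halfIdx p)

end Halves

lemma card_fixed_sign_true_eq_card_fixed_sign_false {m : ℕ} (σ : Equiv.Perm (Fin m))
    (s : Fin m → Bool) (hskew : ∀ p, σ p.rev = (σ p).rev)
    (hflip : ∀ p, σ p = p → s p.rev = !s p) :
    (Finset.univ.filter fun p => σ p = p ∧ s p = true).card =
      (Finset.univ.filter fun p => σ p = p ∧ s p = false).card := by
  have hrev (b : Bool) (p : Fin m) (hp : σ p = p ∧ s p = b) :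
      σ p.rev = p.rev ∧ s p.rev = !b :=
    ⟨by rw [hskew, hp.1], by rw [hflip p hp.1, hp.2]⟩
  refine Finset.card_nbij' Fin.rev Fin.rev ?_ ?_ (fun p _ => Fin.rev_rev p)
    (fun p _ => Fin.rev_rev p)
  · intro p hp
    simpa using hrev true p (by simpa using hp)
  · intro p hp
    simpa using hrev false p (by simpa using hp)

namespace SignedInvolution

variable {n : ℕ} (t : SignedInvolution (Fin n))

/-- Position `i` of the first half carries `−` if `t.sign i = false`, and is otherwise matched
with the mirror image of position `t i`. -/
def clanPerm (p : Fin (2 * n)) : Fin (2 * n) :=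
  if t.sign (halfIdx p) then
    if p.val < n then highPos (t (halfIdx p)) else lowPos (t (halfIdx p))
  else p

def clanSign (p : Fin (2 * n)) : Bool :=
  if p.val < n then t.sign (halfIdx p) else true

@[simp] lemma clanPerm_lowPos (i : Fin n) :
    t.clanPerm (lowPos i) = if t.sign i then highPos (t i) else lowPos i := by
  simp [clanPerm]

@[simp] lemma clanPerm_highPos (i : Fin n) :
    t.clanPerm (highPos i) = if t.sign i then lowPos (t i) else highPos i := by
  rw [clanPerm, halfIdx_highPos, if_neg (not_highPos_lt i)]

@[simp] lemma clanSign_lowPos (i : Fin n) : t.clanSign (lowPos i) = t.sign i := by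
  simp [clanSign]

@[simp] lemma clanSign_highPos (i : Fin n) : t.clanSign (highPos i) = true := by
  rw [clanSign, if_neg (not_highPos_lt i)]

lemma clanPerm_eq_self_iff (p : Fin (2 * n)) : t.clanPerm p = p ↔ t.sign (halfIdx p) = false := by
  induction p using halves_induction with
  | low i => cases h : t.sign i <;> simp [h]
  | high i => cases h : t.sign i <;> simp [h]

lemma clanPerm_involutive : Involutive t.clanPerm := by
  intro p
  induction p using halves_induction with
  | low i => cases h : t.sign i <;> simp [h, sign_apply]
  | high i => cases h : t.sign i <;> simp [h, sign_apply]

lemma clanPerm_rev (p : Fin (2 * n)) : t.clanPerm p.rev = (t.clanPerm p).rev := by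
  induction p using halves_induction with
  | low i => cases h : t.sign i <;> simp [h]
  | high i => cases h : t.sign i <;> simp [h]

lemma isLargestSectClan_clanPerm :
    IsLargestSectClan n (t.clanPerm_involutive.toPerm _) t.clanSign := by
  have hflip (p : Fin (2 * n)) (hp : t.clanPerm p = p) : t.clanSign p.rev = !t.clanSign p := by
    rw [clanPerm_eq_self_iff] at hp
    induction p using halves_induction with
    | low i => simp_all
    | high i => simp_all
  refine ⟨⟨t.clanPerm_involutive, fun p hp => ?_,
      card_fixed_sign_true_eq_card_fixed_sign_false _ _ t.clanPerm_rev hflip, t.clanPerm_rev,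
      hflip⟩,
    fun p hp => ?_, fun p hp => ?_⟩
  all_goals
    simp only [Involutive.coe_toPerm, ne_eq, clanPerm_eq_self_iff] at hp ⊢
    induction p using halves_induction with
    | low i => simp_all [not_highPos_lt]
    | high i => simp_all [not_highPos_lt]

end SignedInvolution

namespace IsLargestSectClan

variable {n : ℕ} {σ : Equiv.Perm (Fin (2 * n))} {s : Fin (2 * n) → Bool}
  (h : IsLargestSectClan n σ s)
include h

lemma apply_lowPos_of_sign_eq_false {i : Fin n} (hi : s (lowPos i) = false) :
    σ (lowPos i) = lowPos i := by
  by_contra hne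
  simp [h.1.2.1 _ hne] at hi

lemma apply_lowPos_of_sign_eq_true {i : Fin n} (hi : s (lowPos i) = true) :
    σ (lowPos i) = highPos (halfIdx (σ (lowPos i))) := by
  have hne : σ (lowPos i) ≠ lowPos i := fun hfix => by
    simpa [hi] using (h.2.1 _ hfix).2 (lowPos_lt i)
  exact (highPos_halfIdx ((h.2.2 _ hne).1 (lowPos_lt i))).symm

lemma apply_highPos (i : Fin n) : σ (highPos i) = (σ (lowPos i)).rev := by
  rw [← rev_lowPos, h.1.2.2.2.1]

lemma sign_highPos (i : Fin n) : s (highPos i) = true := by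
  by_cases hfix : σ (highPos i) = highPos i
  · simpa [not_highPos_lt] using mt (h.2.1 _ hfix).1
  · exact h.1.2.1 _ hfix

def toSignedInvolution : SignedInvolution (Fin n) where
  toFun i := halfIdx (σ (lowPos i))
  sign i := s (lowPos i)
  involutive i := by
    cases hi : s (lowPos i)
    · simp [h.apply_lowPos_of_sign_eq_false hi]
    · have hσ : σ (lowPos (halfIdx (σ (lowPos i)))) = highPos i := by
        rw [← rev_highPos, h.1.2.2.2.1, ← h.apply_lowPos_of_sign_eq_true hi, h.1.1]
        rfl
      simp [hσ]
  sign_eq_true_of_ne i hi := by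
    by_contra hs
    simp [h.apply_lowPos_of_sign_eq_false (by simpa using hs)] at hi

@[simp] lemma toSignedInvolution_apply (i : Fin n) :
    h.toSignedInvolution i = halfIdx (σ (lowPos i)) := rfl

@[simp] lemma sign_toSignedInvolution (i : Fin n) :
    h.toSignedInvolution.sign i = s (lowPos i) := rfl

lemma clanPerm_toSignedInvolution : h.toSignedInvolution.clanPerm = σ := by
  ext p : 1
  induction p using halves_induction with
  | low i =>
    cases hi : s (lowPos i)
    · simp [hi, h.apply_lowPos_of_sign_eq_false hi]
    · simp [hi, ← h.apply_lowPos_of_sign_eq_true hi]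
  | high i =>
    cases hi : s (lowPos i)
    · simp [hi, h.apply_highPos, h.apply_lowPos_of_sign_eq_false hi]
    · rw [h.apply_highPos, h.apply_lowPos_of_sign_eq_true hi]
      simp [hi]

lemma clanSign_toSignedInvolution : h.toSignedInvolution.clanSign = s := by
  ext p : 1
  induction p using halves_induction with
  | low i => simp
  | high i => simp [h.sign_highPos]

end IsLargestSectClan

lemma SignedInvolution.toSignedInvolution_isLargestSectClan {n : ℕ}
    (t : SignedInvolution (Fin n)) : t.isLargestSectClan_clanPerm.toSignedInvolution = t := by
  ext i
  · cases hi : t.sign i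
    · simp [hi, t.apply_eq_self_of_sign_eq_false hi]
    · simp [hi]
  · simp

def largestSectClanEquiv (n : ℕ) :
    {p : Equiv.Perm (Fin (2 * n)) × (Fin (2 * n) → Bool) // IsLargestSectClan n p.1 p.2} ≃
      SignedInvolution (Fin n) where
  toFun c := c.2.toSignedInvolution
  invFun t := ⟨(t.clanPerm_involutive.toPerm _, t.clanSign), t.isLargestSectClan_clanPerm⟩
  left_inv := by
    rintro ⟨⟨σ, s⟩, h⟩
    exact Subtype.ext (Prod.ext (Equiv.ext fun p => congrFun h.clanPerm_toSignedInvolution p)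
      h.clanSign_toSignedInvolution)
  right_inv := SignedInvolution.toSignedInvolution_isLargestSectClan

lemma epsnum_eq_card_signedInvolution (n : ℕ) :
    epsnum n = Nat.card (SignedInvolution (Fin n)) :=
  Nat.card_congr (largestSectClanEquiv n)

lemma epsnum_zero : epsnum 0 = 1 := by
  rw [epsnum_eq_card_signedInvolution, SignedInvolution.card_of_isEmpty]

lemma epsnum_one : epsnum 1 = 2 := by
  rw [epsnum_eq_card_signedInvolution, Nat.card_congr (SignedInvolution.congr (finSuccEquiv 0)),
    SignedInvolution.card_option, SignedInvolution.card_of_isEmpty]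
  simp

lemma epsnum_add_two (n : ℕ) : epsnum (n + 2) = 2 * epsnum (n + 1) + (n + 1) * epsnum n := by
  simp only [epsnum_eq_card_signedInvolution, SignedInvolution.card_fin_add_two]

theorem iteratedDeriv_add_two_of_deriv_eq_affine_mul {𝕜 : Type*} [NontriviallyNormedField 𝕜]
    {f : 𝕜 → 𝕜} {a : 𝕜} (hf : ContDiff 𝕜 ⊤ f)
    (hdf : deriv f = fun z => (a + z) * f z) (n : ℕ) :
    iteratedDeriv (n + 2) f =
      fun z => (a + z) * iteratedDeriv (n + 1) f z + (n + 1) * iteratedDeriv n f z := by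
  have hd (k : ℕ) : Differentiable 𝕜 (iteratedDeriv k f) :=
    hf.differentiable_iteratedDeriv k (WithTop.coe_lt_top _)
  have hda : deriv (fun z => a + z) = fun _ => 1 := by ext z; simp
  induction n with
  | zero =>
    rw [iteratedDeriv_succ, iteratedDeriv_one, hdf]
    ext z
    rw [deriv_fun_mul (by fun_prop) (hf.differentiable (by simp) z), ← hdf, hda]
    simp only [iteratedDeriv_zero]
    ring
  | succ n ih =>
    have hd₁ := hd (n + 1)
    have hd₀ := hd n
    conv_lhs => rw [show n + 1 + 2 = (n + 2) + 1 by ring, iteratedDeriv_succ, ih]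
    ext z
    rw [deriv_fun_add (by fun_prop) (by fun_prop), deriv_fun_mul (by fun_prop) (by fun_prop),
      deriv_const_mul _ (by fun_prop), ← iteratedDeriv_succ, ← iteratedDeriv_succ, hda]
    beta_reduce
    push_cast
    ring

lemma deriv_cexp_two_mul_add_sq_div_two :
    deriv (fun z : ℂ => Complex.exp (2 * z + z ^ 2 / 2)) =
      fun z => (2 + z) * Complex.exp (2 * z + z ^ 2 / 2) := by
  ext z
  have h : HasDerivAt (fun z : ℂ => 2 * z + z ^ 2 / 2) (2 + z) z := by
    refine (((hasDerivAt_id' z).const_mul 2).fun_add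
      ((hasDerivAt_pow 2 z).div_const 2)).congr_deriv ?_
    push_cast
    ring
  rw [h.cexp.deriv, mul_comm]

open Nat in
theorem hasSum_mul_pow_div_factorial_of_recurrence {a : ℕ → ℝ} (h₀ : a 0 = 1)
    (h₁ : a 1 = 2) (hrec : ∀ n, a (n + 2) = 2 * a (n + 1) + (n + 1) * a n) (x : ℝ) :
    HasSum (fun n => a n * x ^ n / n !) (Real.exp (2 * x + x ^ 2 / 2)) := by
  set g : ℂ → ℂ := fun z => Complex.exp (2 * z + z ^ 2 / 2)
  have hg : ContDiff ℂ ⊤ g := by fun_prop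
  have hcoeff : ∀ n, iteratedDeriv n g 0 = a n := by
    refine Nat.twoStepInduction ?_ ?_ fun n ih₀ ih₁ => ?_
    · simp [g, h₀]
    · simp [g, h₁, deriv_cexp_two_mul_add_sq_div_two]
    · rw [iteratedDeriv_add_two_of_deriv_eq_affine_mul hg deriv_cexp_two_mul_add_sq_div_two]
      beta_reduce
      rw [ih₀, ih₁, hrec]
      push_cast
      ring
  have htaylor := Complex.hasSum_taylorSeries_of_entire (hg.differentiable (by simp)) 0 x
  have hterms : (fun n : ℕ => (n ! : ℂ)⁻¹ • ((x : ℂ) - 0) ^ n • iteratedDeriv n g 0) =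
      fun n => ((a n * x ^ n / n ! : ℝ) : ℂ) := by
    ext n
    rw [hcoeff, sub_zero, smul_eq_mul, smul_eq_mul]
    push_cast
    ring
  rw [hterms, show g x = (Real.exp (2 * x + x ^ 2 / 2) : ℂ) by push_cast; rfl] at htaylor
  exact Complex.hasSum_ofReal.mp htaylor

/-- for every real `x`, the series `Σ ε_n·xⁿ/n!` converges with sum
`e^(2x + x²/2)`. -/
theorem stmt15 (x : ℝ) :
    HasSum (fun n : ℕ => (epsnum n : ℝ) * x ^ n / (Nat.factorial n : ℝ))
      (Real.exp (2 * x + x ^ 2 / 2)) := by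
  refine hasSum_mul_pow_div_factorial_of_recurrence (by simp [epsnum_zero])
    (by simp [epsnum_one]) (fun n => ?_) x
  rw [epsnum_add_two]
  push_cast
  ring
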